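/- For any two strings X and Y of the same length n, and any partition points 0 = j_0 < j_1 < ... < j_B = n, there exist integer shifts s_1, ..., s_B such that the sum over i of ED(X[j_{i-1}..j_i), Y[j_{i-1}+s_i .. j_i+s_i)) is at most 2·ED(X, Y), and 2|s_i| ≤ ED(X, Y) for every i. -/

import Mathlib

open Finset

/-- Cost structure for the Levenshtein distance (removed from Mathlib; restored with its old meaning). -/
structure Levenshtein.Cost (α β δ : Type*) where
  delete : α → δ
  insert : β → δ
  substitute : α → β → δ

/-- The default unit cost, as in the old Mathlib `Levenshtein.defaultCost`. -/
def Levenshtein.defaultCost {α : Type*} [DecidableEq α] : Levenshtein.Cost α α ℕ where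
  delete _ := 1
  insert _ := 1
  substitute a b := if a = b then 0 else 1

/-- The Levenshtein distance, characterized by the same equations as the old Mathlib `levenshtein`. -/
def levenshtein {α β δ : Type*} (C : Levenshtein.Cost α β δ) [Min δ] [Add δ] [Zero δ] :
    List α → List β → δ
  | [], [] => 0
  | [], y :: ys => C.insert y + levenshtein C [] ys
  | x :: xs, [] => C.delete x + levenshtein C xs []
  | x :: xs, y :: ys =>
    min (C.delete x + levenshtein C xs (y :: ys))
      (min (C.insert y + levenshtein C (x :: xs) ys) (C.substitute x y + levenshtein C xs ys))

/-- Edit distance of two lists (unit-cost Levenshtein distance). -/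
def ED {α : Type*} [DecidableEq α] (X Y : List α) : ℕ :=
  levenshtein Levenshtein.defaultCost X Y

/-- Clamped substring `X[a..b)`: out-of-bounds indices are clamped to `[0, |X|)`. -/
def sub {α : Type*} (X : List α) (a b : ℤ) : List α :=
  (X.take b.toNat).drop a.toNat

/-- Hamming distance between (equal-length) lists. -/
def HD {α : Type*} [DecidableEq α] (X Y : List α) : ℕ :=
  ((X.zip Y).filter (fun p => p.1 ≠ p.2)).length

/-- `A` is an optimal alignment between `X` and `Y`. -/
def IsOptAlign {α : Type*} [DecidableEq α] (X Y : List α) (A : ℕ → ℕ) : Prop :=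
  A 0 = 0 ∧ A X.length = Y.length ∧
    (∀ i j, i ≤ j → j ≤ X.length → A i ≤ A j) ∧
    ED X Y = ∑ i ∈ Finset.range X.length,
      ED (sub X i (i + 1)) (sub Y (A i) (A (i + 1)))

/-!
Cutting an optimal alignment of `X` with `Y` at the block boundaries `j_i` gives cut points
`0 = k_0 ≤ k_1 ≤ ⋯ ≤ k_B = n` with `∑ᵢ ED(X[j_i..j_{i+1}), Y[k_i..k_{i+1})) ≤ ED(X, Y)`; take
`s_i = k_i - j_i`. Replacing the window `Y[k_i..k_{i+1})` by the window of the block's own length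
starting at `k_i` costs at most the difference of the two lengths, which is itself at most the
cost of the block, so each term at most doubles. The shift changes across block `i` by that same
length difference; as it vanishes at both ends, `|s_i|` is bounded both by the cost of the blocks
before `i` and by the cost of the blocks after it, whence `2|s_i| ≤ ED(X, Y)`.
-/

lemma eq_or_eq_or_eq_of_eq_min_min {β : Type*} [LinearOrder β] {m a b c : β}
    (h : m = min a (min b c)) : m = a ∨ m = b ∨ m = c := by
  subst h
  rcases min_choice a (min b c) with h | h
  · exact Or.inl h
  · rw [h]
    exact Or.inr (min_choice b c)

lemma two_nsmul_abs_le_sum_of_abs_sub_le {G : Type*} [AddCommGroup G] [LinearOrder G]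
    [IsOrderedAddMonoid G] {g e : ℕ → G} {B : ℕ} (h0 : g 0 = 0) (hB : g B = 0)
    (he : ∀ m < B, |g (m + 1) - g m| ≤ e m) {i : ℕ} (hi : i ≤ B) :
    2 • |g i| ≤ ∑ m ∈ range B, e m := by
  have hleft : |g i| ≤ ∑ m ∈ range i, e m := calc
    |g i| = |∑ m ∈ range i, (g (m + 1) - g m)| := by rw [sum_range_sub, h0, sub_zero]
    _ ≤ ∑ m ∈ range i, |g (m + 1) - g m| := abs_sum_le_sum_abs _ _
    _ ≤ ∑ m ∈ range i, e m := sum_le_sum fun m hm => he m (by simp at hm; omega)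
  have hright : |g i| ≤ ∑ m ∈ Ico i B, e m := calc
    |g i| = |∑ m ∈ Ico i B, (g (m + 1) - g m)| := by
      rw [sum_Ico_sub _ hi, hB, zero_sub, abs_neg]
    _ ≤ ∑ m ∈ Ico i B, |g (m + 1) - g m| := abs_sum_le_sum_abs _ _
    _ ≤ ∑ m ∈ Ico i B, e m := sum_le_sum fun m hm => he m (by simp at hm; omega)
  rw [two_nsmul, ← sum_range_add_sum_Ico _ hi]
  exact add_le_add hleft hright

section EditDistance

variable {α : Type*} [DecidableEq α]

@[simp]
lemma ED_nil_left (Y : List α) : ED [] Y = Y.length := by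
  induction Y with
  | nil => simp [ED, levenshtein]
  | cons y Y ih => rw [ED, levenshtein, ← ED, ih]; simp [Levenshtein.defaultCost, add_comm]

@[simp]
lemma ED_nil_right (X : List α) : ED X [] = X.length := by
  induction X with
  | nil => simp [ED, levenshtein]
  | cons x X ih => rw [ED, levenshtein, ← ED, ih]; simp [Levenshtein.defaultCost, add_comm]

lemma ED_cons_cons (x y : α) (X Y : List α) :
    ED (x :: X) (y :: Y) = min (1 + ED X (y :: Y))
      (min (1 + ED (x :: X) Y) ((if x = y then 0 else 1) + ED X Y)) := by
  rw [ED, levenshtein]; rfl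

lemma ED_cons_left_le (x : α) (X Y : List α) : ED (x :: X) Y ≤ 1 + ED X Y := by
  cases Y with
  | nil => simp [add_comm]
  | cons y Y => rw [ED_cons_cons]; exact min_le_left _ _

lemma ED_cons_right_le (X : List α) (y : α) (Y : List α) : ED X (y :: Y) ≤ 1 + ED X Y := by
  cases X with
  | nil => simp [add_comm]
  | cons x X => rw [ED_cons_cons]; exact (min_le_right _ _).trans (min_le_left _ _)

lemma ED_cons_cons_le (x y : α) (X Y : List α) :
    ED (x :: X) (y :: Y) ≤ (if x = y then 0 else 1) + ED X Y := by
  rw [ED_cons_cons]; exact (min_le_right _ _).trans (min_le_right _ _)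

lemma ED_comm (X Y : List α) : ED X Y = ED Y X := by
  induction X generalizing Y with
  | nil => simp
  | cons x X ihX =>
    induction Y with
    | nil => simp
    | cons y Y ihY =>
      rw [ED_cons_cons, ED_cons_cons, ihX, ihX, ihY, min_left_comm]
      simp only [@eq_comm _ x y]

lemma ED_le_length_add_length (X Y : List α) : ED X Y ≤ X.length + Y.length := by
  induction X with
  | nil => simp
  | cons x X ih => have := ED_cons_left_le x X Y; simp only [List.length_cons]; omega

lemma ED_append_right_le (X L T : List α) : ED X (L ++ T) ≤ ED X L + T.length := by
  induction X generalizing L with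
  | nil => simp
  | cons x X ihX =>
    induction L with
    | nil => simpa using ED_le_length_add_length (x :: X) T
    | cons l L ihL =>
      rw [List.cons_append, ED_cons_cons, ED_cons_cons]
      have := ihX (l :: L)
      have := ihX L
      rw [List.cons_append] at *
      split_ifs <;> omega

lemma length_le_ED_add_length (X Y : List α) : X.length ≤ ED X Y + Y.length := by
  induction X generalizing Y with
  | nil => simp
  | cons x X ihX =>
    induction Y with
    | nil => simp
    | cons y Y ihY =>
      rw [ED_cons_cons]
      have := ihX (y :: Y)
      have := ihX Y
      simp only [List.length_cons] at *
      split_ifs <;> omega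

lemma ED_le_ED_append_right (X L T : List α) : ED X L ≤ ED X (L ++ T) + T.length := by
  induction X generalizing L with
  | nil => simp; omega
  | cons x X ihX =>
    induction L with
    | nil => simpa using length_le_ED_add_length (x :: X) T
    | cons l L ihL =>
      rw [List.cons_append, ED_cons_cons, ED_cons_cons]
      have := ihX (l :: L)
      have := ihX L
      rw [List.cons_append] at *
      split_ifs <;> omega

lemma abs_length_sub_length_le_ED (X Y : List α) : |(X.length : ℤ) - Y.length| ≤ ED X Y := by
  have := length_le_ED_add_length X Y
  have := length_le_ED_add_length Y X
  rw [ED_comm] at this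
  rw [abs_le]
  omega

lemma ED_take_length_le_two_mul (C Z : List α) (m : ℕ) :
    ED C (Z.take C.length) ≤ 2 * ED C (Z.take m) := by
  have hm := length_le_ED_add_length C (Z.take m)
  have hC := length_le_ED_add_length (Z.take m) C
  rw [ED_comm] at hC
  rcases le_total m C.length with h | h
  · have hsplit := List.take_append_drop m (Z.take C.length)
    rw [List.take_take, min_eq_left h] at hsplit
    have := ED_append_right_le C (Z.take m) ((Z.take C.length).drop m)
    rw [hsplit] at this
    simp only [List.length_drop, List.length_take] at this hm
    omega
  · have hsplit := List.take_append_drop C.length (Z.take m)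
    rw [List.take_take, min_eq_left h] at hsplit
    have := ED_le_ED_append_right C (Z.take C.length) ((Z.take m).drop C.length)
    rw [hsplit] at this
    simp only [List.length_drop, List.length_take] at this hC
    omega

lemma exists_append_eq_ED_add_ED_le (X₁ X₂ Y : List α) :
    ∃ Y₁ Y₂, Y = Y₁ ++ Y₂ ∧ ED X₁ Y₁ + ED X₂ Y₂ ≤ ED (X₁ ++ X₂) Y := by
  induction X₁ generalizing Y with
  | nil => exact ⟨[], Y, rfl, by simp⟩
  | cons x X₁ ihX =>
    induction Y with
    | nil => exact ⟨[], [], rfl, by simp; omega⟩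
    | cons y Y ihY =>
      have hcases := ED_cons_cons x y (X₁ ++ X₂) Y
      rw [← List.cons_append] at hcases
      rcases eq_or_eq_or_eq_of_eq_min_min hcases with h | h | h <;> rw [h]
      · obtain ⟨Y₁, Y₂, hY, h⟩ := ihX (y :: Y)
        exact ⟨Y₁, Y₂, hY, by linarith [ED_cons_left_le x X₁ Y₁]⟩
      · obtain ⟨Y₁, Y₂, rfl, h⟩ := ihY
        exact ⟨y :: Y₁, Y₂, rfl, by linarith [ED_cons_right_le (x :: X₁) y Y₁]⟩
      · obtain ⟨Y₁, Y₂, rfl, h⟩ := ihX Y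
        exact ⟨y :: Y₁, Y₂, rfl, by linarith [ED_cons_cons_le x y X₁ Y₁]⟩

end EditDistance

section Substrings

variable {α : Type*}

lemma sub_natCast (X : List α) (a b : ℕ) : sub X a b = (X.drop a).take (b - a) := by
  simp [sub, List.drop_take]

lemma length_sub (X : List α) {a b : ℕ} (hb : b ≤ X.length) :
    (sub X a b).length = b - a := by
  simp [sub_natCast]
  omega

@[simp]
lemma sub_zero_length (X : List α) : sub X 0 X.length = X := by
  simp [sub]

lemma sub_append_sub (X : List α) {a b c : ℕ} (hab : a ≤ b) (hbc : b ≤ c) :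
    sub X a b ++ sub X b c = sub X a c := by
  rw [sub_natCast, sub_natCast, sub_natCast, show c - a = (b - a) + (c - b) by omega,
    List.take_add, List.drop_drop, Nat.add_sub_cancel' hab]

lemma sub_append_length_add (Y₁ Y₂ : List α) (a b : ℕ) :
    sub (Y₁ ++ Y₂) (Y₁.length + a : ℕ) (Y₁.length + b : ℕ) = sub Y₂ a b := by
  rw [sub_natCast, sub_natCast, Nat.add_sub_add_left, List.drop_append,
    List.drop_eq_nil_of_le (by omega), List.nil_append, Nat.add_sub_cancel_left]

lemma sub_append_zero_length (Y₁ Y₂ : List α) : sub (Y₁ ++ Y₂) 0 Y₁.length = Y₁ := by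
  simp [sub]

end Substrings

section Cuts

variable {α : Type*} [DecidableEq α]

lemma ED_sub_shift_le (X Y : List α) {a b : ℕ} (c d : ℕ) (hab : a ≤ b)
    (hb : b ≤ X.length) :
    ED (sub X a b) (sub Y (a + ((c : ℤ) - a)) (b + ((c : ℤ) - a)))
      ≤ 2 * ED (sub X a b) (sub Y c d) := by
  rw [show (a : ℤ) + (c - a) = c by ring,
    show (b : ℤ) + (c - a) = (c + (b - a) : ℕ) by push_cast; omega,
    sub_natCast Y c, sub_natCast Y c, Nat.add_sub_cancel_left, ← length_sub X hb]
  exact ED_take_length_le_two_mul _ (Y.drop c) (d - c)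

lemma abs_sub_sub_sub_le_ED_sub (X Y : List α) {a b c d : ℕ} (hab : a ≤ b) (hb : b ≤ X.length)
    (hcd : c ≤ d) (hd : d ≤ Y.length) :
    |((d : ℤ) - b) - (c - a)| ≤ ED (sub X a b) (sub Y c d) := by
  have := abs_length_sub_length_le_ED (sub X a b) (sub Y c d)
  rw [length_sub X hb, length_sub Y hd, abs_le] at this
  rw [abs_le]
  omega

lemma exists_monotone_cuts_sum_ED_le (X Y : List α) (B : ℕ) (j : ℕ → ℕ)
    (hj : MonotoneOn j (Set.Iic (B + 1))) :
    ∃ k : ℕ → ℕ, Monotone k ∧ k 0 = 0 ∧ k (B + 1) = Y.length ∧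
      ∑ i ∈ range (B + 1), ED (sub X (j i) (j (i + 1))) (sub Y (k i) (k (i + 1)))
        ≤ ED (sub X (j 0) (j (B + 1))) Y := by
  induction B generalizing j Y with
  | zero =>
    refine ⟨fun i => if i = 0 then 0 else Y.length, fun a b hab => ?_, rfl, rfl, by simp⟩
    dsimp only
    split_ifs <;> omega
  | succ B ih =>
    have hj01 : j 0 ≤ j 1 := hj (by simp) (by simp) zero_le_one
    have hj1B : j 1 ≤ j (B + 2) := hj (by simp) (by simp) (by omega)
    obtain ⟨Y₁, Y₂, rfl, hsplit⟩ :=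
      exists_append_eq_ED_add_ED_le (sub X (j 0) (j 1)) (sub X (j 1) (j (B + 2))) Y
    obtain ⟨k, hk, hk0, hkB, hsum⟩ := ih Y₂ (fun i => j (i + 1))
      (fun a ha b hb hab => hj (by simp at ha ⊢; omega) (by simp at hb ⊢; omega) (by omega))
    refine ⟨fun i => match i with | 0 => 0 | i + 1 => Y₁.length + k i, ?_, rfl, ?_, ?_⟩
    · refine monotone_nat_of_le_succ fun i => ?_
      cases i with
      | zero => exact Nat.zero_le _
      | succ i => exact Nat.add_le_add_left (hk (Nat.le_succ i)) _
    · simp [hkB]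
    · rw [sum_range_succ', ← sub_append_sub X hj01 hj1B]
      simp only [sub_append_length_add, hk0, add_zero, Nat.cast_zero, sub_append_zero_length]
      linarith

end Cuts

theorem divide_and_conquer_upper_bound {α : Type*} [DecidableEq α]
    (n B : ℕ) (X Y : List α) (hX : X.length = n) (hY : Y.length = n)
    (j : ℕ → ℕ) (hj0 : j 0 = 0) (hjB : j B = n)
    (hmono : ∀ i < B, j i < j (i + 1)) :
    ∃ s : ℕ → ℤ,
      (∑ i ∈ Finset.range B,
        ED (sub X (j i) (j (i + 1))) (sub Y (j i + s i) (j (i + 1) + s i))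
          ≤ 2 * ED X Y) ∧
      ∀ i < B, 2 * (s i).natAbs ≤ ED X Y := by
  obtain _ | B := B
  · exact ⟨0, by simp, by simp⟩
  have hj : MonotoneOn j (Set.Iic (B + 1)) := (strictMonoOn_Iic_of_lt_succ hmono).monotoneOn
  have hjX : ∀ i ≤ B + 1, j i ≤ X.length := fun i hi =>
    hX ▸ hjB ▸ hj hi (Set.mem_Iic.2 le_rfl) hi
  obtain ⟨k, hk, hk0, hkB, hsum⟩ := exists_monotone_cuts_sum_ED_le X Y B j hj
  rw [hj0, hjB, ← hX, Nat.cast_zero, sub_zero_length] at hsum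
  refine ⟨fun i => k i - j i, ?_, fun i hi => ?_⟩
  · calc
      _ ≤ ∑ i ∈ range (B + 1), 2 * ED (sub X (j i) (j (i + 1))) (sub Y (k i) (k (i + 1))) :=
          sum_le_sum fun i hi =>
            ED_sub_shift_le X Y _ _ (hmono i (mem_range.mp hi)).le (hjX _ (mem_range.mp hi))
      _ ≤ 2 * ED X Y := by rw [← mul_sum]; omega
  · have hdrift : ∀ m < B + 1, |((k (m + 1) : ℤ) - j (m + 1)) - (k m - j m)|
        ≤ ED (sub X (j m) (j (m + 1))) (sub Y (k m) (k (m + 1))) := fun m hm =>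
      abs_sub_sub_sub_le_ED_sub X Y (hmono m hm).le (hjX _ hm) (hk m.le_succ) (hkB ▸ hk hm)
    have hshift := two_nsmul_abs_le_sum_of_abs_sub_le (g := fun i => (k i : ℤ) - j i)
      (by simp [hk0, hj0]) (by simp [hkB, hjB, hY]) hdrift hi.le
    simp only [nsmul_eq_mul, Int.abs_eq_natAbs, ← Nat.cast_sum] at hshift
    show 2 * ((k i : ℤ) - j i).natAbs ≤ ED X Y
    omega
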